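/- Let E be a finite-dimensional real inner product space, let κ : E → E be a symmetric linear map satisfying ⟨κ(x), x⟩ > 0 for every x ≠ 0, and let χ : [0,∞) → ℝ be a continuous function with χ(r) > 0 for all r, such that χ is bounded, the function r ↦ r·χ(r²) is bounded on [0,∞), and r·χ(r) → ∞ as r → ∞. Then for any fixed vectors μ₀, φ₀ ∈ E, the function λ ↦ χ(‖φ₀ + λ‖²) · ⟨μ₀ + κ(λ), φ₀ + λ⟩ tends to +∞ as ‖λ‖ → ∞. -/
import Mathlib


open scoped InnerProductSpace

/-- The analytic core of Lemma 4.2: with `κ` symmetric positive definite and `χ`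
bounded, positive, with `r·χ(r²)` bounded and `r·χ(r) → ∞`, the function
`λ ↦ χ(‖φ₀+λ‖²)·⟨μ₀+κλ, φ₀+λ⟩` tends to `+∞` as `‖λ‖ → ∞`. -/
theorem stmt0 {E : Type*} [NormedAddCommGroup E] [InnerProductSpace ℝ E]
    [FiniteDimensional ℝ E]
    (κ : E →ₗ[ℝ] E)
    (hκsym : ∀ x y : E, ⟪κ x, y⟫_ℝ = ⟪x, κ y⟫_ℝ)
    (hκpos : ∀ x : E, x ≠ 0 → 0 < ⟪κ x, x⟫_ℝ)
    (χ : ℝ → ℝ) (hχcont : ContinuousOn χ (Set.Ici 0))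
    (hχpos : ∀ r ≥ (0:ℝ), 0 < χ r)
    (hχbdd : ∃ C : ℝ, ∀ r ≥ (0:ℝ), χ r ≤ C)
    (hχ2bdd : ∃ C : ℝ, ∀ r ≥ (0:ℝ), r * χ (r ^ 2) ≤ C)
    (hχinf : Filter.Tendsto (fun r : ℝ => r * χ r) Filter.atTop Filter.atTop)
    (μ₀ φ₀ : E) :
    Filter.Tendsto
      (fun lam : E => χ (‖φ₀ + lam‖ ^ 2) * ⟪μ₀ + κ lam, φ₀ + lam⟫_ℝ)
      (Filter.comap (fun lam : E => ‖lam‖) Filter.atTop) Filter.atTop := by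
  obtain ⟨C₂, hC₂⟩ := hχ2bdd
  set K := max C₂ 0 with hKdef
  have hK0 : (0:ℝ) ≤ K := le_max_right _ _
  have hKb : ∀ r ≥ (0:ℝ), r * χ (r ^ 2) ≤ K := fun r hr =>
    (hC₂ r hr).trans (le_max_left _ _)
  -- coercivity of κ
  have hcoerc : ∃ m > (0:ℝ), ∀ x : E, m * ‖x‖ ^ 2 ≤ ⟪κ x, x⟫_ℝ := by
    by_cases hE : Nontrivial E
    · have hκc : Continuous κ := κ.continuous_of_finiteDimensional
      have hcont : ContinuousOn (fun x : E => ⟪κ x, x⟫_ℝ) (Metric.sphere 0 1) :=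
        (continuous_inner.comp (hκc.prodMk continuous_id)).continuousOn
      obtain ⟨x₀, hx₀, hmin⟩ := (isCompact_sphere (0:E) 1).exists_isMinOn
        (NormedSpace.sphere_nonempty.mpr zero_le_one) hcont
      have hx₀n : ‖x₀‖ = 1 := by simpa using hx₀
      have hx₀ne : x₀ ≠ 0 := by
        intro h; rw [h, norm_zero] at hx₀n; norm_num at hx₀n
      refine ⟨⟪κ x₀, x₀⟫_ℝ, hκpos x₀ hx₀ne, fun x => ?_⟩
      rcases eq_or_ne x 0 with rfl | hx
      · simp
      · have hxn : (0:ℝ) < ‖x‖ := norm_pos_iff.mpr hx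
        set u := ‖x‖⁻¹ • x with hu
        have hun : u ∈ Metric.sphere (0:E) 1 := by
          simp [hu, norm_smul, abs_of_pos (inv_pos.mpr hxn), inv_mul_cancel₀ hxn.ne']
        have hle : ⟪κ x₀, x₀⟫_ℝ ≤ ⟪κ u, u⟫_ℝ := hmin hun
        have hval : ⟪κ u, u⟫_ℝ = ‖x‖⁻¹ * (‖x‖⁻¹ * ⟪κ x, x⟫_ℝ) := by
          simp [hu, map_smul, real_inner_smul_left, real_inner_smul_right]
        rw [hval] at hle
        have h2 : ⟪κ x₀, x₀⟫_ℝ * ‖x‖ ^ 2 ≤ ⟪κ x, x⟫_ℝ := by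
          have := mul_le_mul_of_nonneg_right hle (le_of_lt (mul_pos hxn hxn))
          field_simp at this
          nlinarith [this]
        nlinarith [h2]
    · refine ⟨1, one_pos, fun x => ?_⟩
      have : Subsingleton E := not_nontrivial_iff_subsingleton.mp hE
      have hx : x = 0 := Subsingleton.elim x 0
      simp [hx]
  obtain ⟨m, hm, hmcoe⟩ := hcoerc
  set c := μ₀ - κ φ₀ with hc
  have key : ∀ lam : E,
      m * (‖φ₀ + lam‖ ^ 2 * χ (‖φ₀ + lam‖ ^ 2)) - ‖c‖ * K
        ≤ χ (‖φ₀ + lam‖ ^ 2) * ⟪μ₀ + κ lam, φ₀ + lam⟫_ℝ := by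
    intro lam
    set z := φ₀ + lam with hz
    have hχz : 0 < χ (‖z‖ ^ 2) := hχpos _ (sq_nonneg _)
    have hsplit : ⟪μ₀ + κ lam, z⟫_ℝ = ⟪κ z, z⟫_ℝ + ⟪c, z⟫_ℝ := by
      have hzz : μ₀ + κ lam = κ z + c := by
        rw [hz, map_add, hc]; abel
      rw [hzz, inner_add_left]
    have h1 : m * ‖z‖ ^ 2 ≤ ⟪κ z, z⟫_ℝ := hmcoe z
    have h2 : -(‖c‖ * ‖z‖) ≤ ⟪c, z⟫_ℝ :=
      (neg_le_neg (abs_real_inner_le_norm c z)).trans (neg_abs_le _)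
    have h3 : ‖z‖ * χ (‖z‖ ^ 2) ≤ K := hKb ‖z‖ (norm_nonneg z)
    have h4 : (0:ℝ) ≤ ‖c‖ := norm_nonneg c
    rw [hsplit]
    nlinarith [mul_le_mul_of_nonneg_left h3 h4,
      mul_le_mul_of_nonneg_right h1 hχz.le,
      mul_le_mul_of_nonneg_right h2 hχz.le]
  -- tendsto part
  set L := Filter.comap (fun lam : E => ‖lam‖) Filter.atTop with hL
  have hnrm : Filter.Tendsto (fun lam : E => ‖lam‖) L Filter.atTop := Filter.tendsto_comap
  have hshift : Filter.Tendsto (fun lam : E => ‖lam‖ + -‖φ₀‖) L Filter.atTop :=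
    Filter.tendsto_atTop_add_const_right L (-‖φ₀‖) hnrm
  have hnorm : Filter.Tendsto (fun lam : E => ‖φ₀ + lam‖) L Filter.atTop := by
    refine Filter.tendsto_atTop_mono (fun lam => ?_) hshift
    have := norm_add_le (φ₀ + lam) (-φ₀)
    simp only [add_neg_cancel_comm, norm_neg] at this
    linarith
  have hsq : Filter.Tendsto (fun lam : E => ‖φ₀ + lam‖ ^ 2) L Filter.atTop :=
    (Filter.tendsto_pow_atTop two_ne_zero).comp hnorm
  have hmain : Filter.Tendsto
      (fun lam : E => ‖φ₀ + lam‖ ^ 2 * χ (‖φ₀ + lam‖ ^ 2)) L Filter.atTop :=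
    hχinf.comp hsq
  have hfin : Filter.Tendsto
      (fun lam : E => m * (‖φ₀ + lam‖ ^ 2 * χ (‖φ₀ + lam‖ ^ 2)) - ‖c‖ * K)
      L Filter.atTop := by
    have := hmain.const_mul_atTop hm
    simpa [sub_eq_add_neg] using
      Filter.tendsto_atTop_add_const_right L (-(‖c‖ * K)) this
  exact Filter.tendsto_atTop_mono key hfin
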